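/- Let M = (1/√3) · [[1, (1/√2)e^{iπ/3}], [√2, -2e^{iπ/3}]], u₀ = (0,1), B = (M†)⁻¹, and uⱼ = Bʲu₀. Then {u₀, u₁, u₂, u₃} is a SIC-POVM in ℂ², i.e., each uⱼ is a unit vector and |⟨uⱼ, uₖ⟩| = 1/√3 for all 0 ≤ j < k ≤ 3. -/

import Mathlib

/-!
Write `ω = exp (iπ/3)`, so that `ω² = ω - 1` and `conj ω = 1 - ω`. The orbit of `u₀ = (0, 1)` is
`u₁ = (√2 ω, -ω) / √3`, `u₂ = (√2 (1 + ω), 2ω - 1) / 3`, `u₃ = (√2 ω, 1) / √3`; rather than inverting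
`M†`, one checks `M† u_{j+1} = u_j`. The SIC conditions are then polynomial identities in `√2`, `√3`
and `ω`.
-/

open Matrix Complex

noncomputable def M : Matrix (Fin 2) (Fin 2) ℂ :=
  ((Real.sqrt 3 : ℂ)⁻¹) •
    !![1, (Real.sqrt 2 : ℂ)⁻¹ * Complex.exp (Real.pi / 3 * Complex.I);
       (Real.sqrt 2 : ℂ), -2 * Complex.exp (Real.pi / 3 * Complex.I)]

noncomputable def B : Matrix (Fin 2) (Fin 2) ℂ := (Mᴴ)⁻¹

noncomputable def u₀ : Fin 2 → ℂ := ![0, 1]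

open ComplexConjugate

local notation "ω" => Complex.exp (Real.pi / 3 * Complex.I)

lemma ofReal_sqrt_two_sq : ((√2 : ℝ) : ℂ) ^ 2 = 2 := by norm_cast; norm_num

lemma ofReal_sqrt_three_sq : ((√3 : ℝ) : ℂ) ^ 2 = 3 := by norm_cast; norm_num

lemma exp_pi_div_three_mul_I : ω = (1 + √3 * I) / 2 := by
  rw [show (Real.pi : ℂ) / 3 * I = ((Real.pi / 3 : ℝ) : ℂ) * I by push_cast; ring, exp_mul_I,
    ← ofReal_cos, ← ofReal_sin, Real.cos_pi_div_three, Real.sin_pi_div_three]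
  push_cast
  ring

lemma exp_pi_div_three_mul_I_sq : ω ^ 2 = ω - 1 := by
  rw [exp_pi_div_three_mul_I]
  linear_combination (I ^ 2 * ofReal_sqrt_three_sq + 3 * I_sq) / 4

lemma conj_exp_pi_div_three_mul_I : conj ω = 1 - ω := by
  rw [exp_pi_div_three_mul_I, map_div₀, map_add, map_mul, conj_ofReal, conj_I, map_one, map_ofNat]
  ring

lemma det_M : M.det = -ω := by
  have h2 : ((√2 : ℝ) : ℂ) ≠ 0 := by simp
  rw [M, det_smul, det_fin_two_of, Fintype.card_fin]
  field_simp
  grind [ofReal_sqrt_three_sq]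

lemma B_mulVec_conjTranspose_M_mulVec (v : Fin 2 → ℂ) : B *ᵥ (Mᴴ *ᵥ v) = v := by
  rw [mulVec_mulVec, B, nonsing_inv_mul _ (by simp [det_M]), one_mulVec]

noncomputable def sicVec : Fin 4 → Fin 2 → ℂ :=
  ![![0, 1],
    (√3 : ℂ)⁻¹ • ![√2 * ω, -ω],
    (3 : ℂ)⁻¹ • ![√2 * (1 + ω), 2 * ω - 1],
    (√3 : ℂ)⁻¹ • ![√2 * ω, 1]]

lemma conjTranspose_M_mulVec_sicVec_succ (j : Fin 3) :
    Mᴴ *ᵥ sicVec j.succ = sicVec j.castSucc := by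
  have hω := exp_pi_div_three_mul_I_sq
  have hω' := conj_exp_pi_div_three_mul_I
  unfold M sicVec
  -- hide `ω` from `simp`, which would otherwise rewrite `π / 3` inside it and miss `hω'`
  generalize ω = w at hω hω' ⊢
  ext i
  fin_cases j <;> fin_cases i <;>
    simp [mulVec, dotProduct, Fin.sum_univ_two, hω', map_ofNat] <;>
    grind [ofReal_sqrt_two_sq, ofReal_sqrt_three_sq]

lemma B_pow_mulVec_u₀ (j : Fin 4) : B ^ (j : ℕ) *ᵥ u₀ = sicVec j := by
  induction j using Fin.induction with
  | zero => simp [u₀, sicVec]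
  | succ j ih =>
    rw [Fin.val_castSucc] at ih
    rw [Fin.val_succ, pow_succ', ← mulVec_mulVec, ih, ← conjTranspose_M_mulVec_sicVec_succ,
      B_mulVec_conjTranspose_M_mulVec]

lemma star_sicVec_dotProduct_self (j : Fin 4) : star (sicVec j) ⬝ᵥ sicVec j = 1 := by
  have hω := exp_pi_div_three_mul_I_sq
  have hω' := conj_exp_pi_div_three_mul_I
  unfold sicVec
  generalize ω = w at hω hω' ⊢
  fin_cases j <;> simp [dotProduct, Fin.sum_univ_two, hω', map_ofNat] <;>
    grind [ofReal_sqrt_two_sq, ofReal_sqrt_three_sq]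

lemma norm_eq_sqrt_of_mul_conj_eq {z : ℂ} {r : ℝ} (h : z * conj z = r) : ‖z‖ = √r := by
  rw [mul_conj] at h
  rw [norm_def, ofReal_inj.mp h]

lemma norm_star_sicVec_dotProduct {j k : Fin 4} (hjk : j ≠ k) :
    ‖star (sicVec j) ⬝ᵥ sicVec k‖ = (√3)⁻¹ := by
  rw [← Real.sqrt_inv]
  apply norm_eq_sqrt_of_mul_conj_eq
  have hω := exp_pi_div_three_mul_I_sq
  have hω' := conj_exp_pi_div_three_mul_I
  unfold sicVec
  generalize ω = w at hω hω' ⊢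
  fin_cases j <;> fin_cases k <;> first
    | exact absurd rfl hjk
    | simp [dotProduct, Fin.sum_univ_two, hω', map_ofNat]
      grind [ofReal_sqrt_two_sq, ofReal_sqrt_three_sq]

theorem stmt3 :
    (∀ j : Fin 4, star ((B ^ (j : ℕ)).mulVec u₀) ⬝ᵥ (B ^ (j : ℕ)).mulVec u₀ = 1) ∧
    (∀ j k : Fin 4, j < k →
      ‖star ((B ^ (j : ℕ)).mulVec u₀) ⬝ᵥ (B ^ (k : ℕ)).mulVec u₀‖ =
        (Real.sqrt 3)⁻¹) := by
  simp only [B_pow_mulVec_u₀]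
  exact ⟨star_sicVec_dotProduct_self, fun j k hjk => norm_star_sicVec_dotProduct hjk.ne⟩
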